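/- For every a ∈ X′′, sup{a(η) : η ∈ H_Q^⊥, ‖η‖ ≤ 1} = inf{c ≥ 0 : ∃ h ∈ 𝔥_Q such that −c•I(e) ≤ a − h ≤ c•I(e)}. -/

import Mathlib

open NormedSpace

/-- Positivity in the dual of an ordered normed space. -/
def dualNonneg (X : Type*) [NormedAddCommGroup X] [NormedSpace ℝ X] [Lattice X]
    (η : StrongDual ℝ X) : Prop :=
  ∀ f : X, 0 ≤ f → 0 ≤ η f

/-- Positivity in the bidual. -/
def bidualNonneg (X : Type*) [NormedAddCommGroup X] [NormedSpace ℝ X] [Lattice X]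
    (a : StrongDual ℝ (StrongDual ℝ X)) : Prop :=
  ∀ η : StrongDual ℝ X, dualNonneg X η → 0 ≤ a η

/-!
Both sides equal the norm of the restriction of `a` to the annihilator `N := H^⊥ ⊆ X′`. For the
supremum this is the definition of the operator norm; for the infimum it is the duality
`dist(a, N^⊥) = ‖a|_N‖`, where `≥` holds because `a - h` restricts to `a|_N` and `≤` is attained by
`a - g` for a norm-preserving Hahn–Banach extension `g` of `a|_N`. It remains to identify the
order interval condition `-c I(e) ≤ b ≤ c I(e)` with `‖b‖ ≤ c`: the set of such `c` is nonempty,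
closed and upward closed, so it is the ray above its infimum `‖b‖`.
-/

open StrongDual

theorem Real.sInf_le_of_mem_of_nonneg {s : Set ℝ} {c : ℝ} (hc : c ∈ s) (hc₀ : 0 ≤ c) :
    sInf s ≤ c := by
  by_cases hs : BddBelow s
  · exact csInf_le hs hc
  · rwa [Real.sInf_of_not_bddBelow hs]

theorem IsUpperSet.mem_of_csInf_le {s : Set ℝ} (hs : IsUpperSet s) (hcl : IsClosed s)
    (hne : s.Nonempty) {c : ℝ} (hc : sInf s ≤ c) : c ∈ s := by
  by_cases hbdd : BddBelow s
  · exact hs hc (hcl.csInf_mem hne hbdd)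
  · obtain ⟨x, hx, hxc⟩ := not_bddBelow_iff.mp hbdd c
    exact hs hxc.le hx

namespace ContinuousLinearMap

variable {E : Type*} [NormedAddCommGroup E] [NormedSpace ℝ E]

theorem sSup_apply_closedBall_eq_norm (f : StrongDual ℝ E) :
    sSup {r : ℝ | ∃ x, ‖x‖ ≤ 1 ∧ r = f x} = ‖f‖ := by
  refine csSup_eq_of_forall_le_of_forall_lt_exists_gt ⟨0, 0, by simp, by simp⟩ ?_ ?_
  · rintro - ⟨x, hx, rfl⟩
    exact (le_abs_self _).trans (f.unit_le_opNorm x hx)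
  · intro w hw
    obtain ⟨x, hx, hwx⟩ := f.exists_lt_apply_of_lt_opNorm hw
    rcases le_total 0 (f x) with hfx | hfx
    · exact ⟨f x, ⟨x, hx.le, rfl⟩, by rwa [Real.norm_of_nonneg hfx] at hwx⟩
    · refine ⟨f (-x), ⟨-x, by simpa using hx.le, rfl⟩, ?_⟩
      rwa [Real.norm_of_nonpos hfx, ← map_neg] at hwx

theorem sSup_apply_closedBall_submodule_eq_norm_comp (N : Submodule ℝ E) (a : StrongDual ℝ E) :
    sSup {r : ℝ | ∃ x ∈ N, ‖x‖ ≤ 1 ∧ r = a x} = ‖a.comp N.subtypeL‖ := by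
  rw [← sSup_apply_closedBall_eq_norm]
  congr 1
  ext r
  exact ⟨fun ⟨x, hx, h1, hr⟩ ↦ ⟨⟨x, hx⟩, h1, hr⟩, fun ⟨x, h1, hr⟩ ↦ ⟨x, x.2, h1, hr⟩⟩

theorem isLeast_norm_sub_polarSubmodule (N : Submodule ℝ E) (a : StrongDual ℝ E) :
    IsLeast {c : ℝ | 0 ≤ c ∧ ∃ h ∈ polarSubmodule ℝ N, ‖a - h‖ ≤ c} ‖a.comp N.subtypeL‖ := by
  constructor
  · obtain ⟨g, hg, hgnorm⟩ := exists_extension_norm_eq N (a.comp N.subtypeL)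
    refine ⟨opNorm_nonneg _, a - g, ?_, by rw [sub_sub_cancel, hgnorm]⟩
    rw [mem_polarSubmodule]
    intro x hx
    simpa [sub_eq_zero] using (hg ⟨x, hx⟩).symm
  · rintro c ⟨-, h, hh, hc⟩
    have hres : a.comp N.subtypeL = (a - h).comp N.subtypeL := by
      ext x
      simp [(mem_polarSubmodule ℝ N h).mp hh x x.2]
    calc ‖a.comp N.subtypeL‖ = ‖(a - h).comp N.subtypeL‖ := by rw [hres]
      _ ≤ ‖a - h‖ * ‖N.subtypeL‖ := opNorm_comp_le _ _
      _ ≤ ‖a - h‖ * 1 := by gcongr; exact Submodule.norm_subtypeL_le N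
      _ ≤ c := by rwa [mul_one]

end ContinuousLinearMap

section OrderUnit

variable {X : Type*} [NormedAddCommGroup X] [NormedSpace ℝ X] [Lattice X]

def orderUnitBounds (e : X) (b : StrongDual ℝ (StrongDual ℝ X)) : Set ℝ :=
  {c | bidualNonneg X (b + c • inclusionInDoubleDual ℝ X e) ∧
    bidualNonneg X (c • inclusionInDoubleDual ℝ X e - b)}

theorem mem_orderUnitBounds_iff {e : X} {b : StrongDual ℝ (StrongDual ℝ X)} {c : ℝ} :
    c ∈ orderUnitBounds e b ↔ ∀ η, dualNonneg X η → |b η| ≤ c * η e := by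
  simp only [orderUnitBounds, bidualNonneg, Set.mem_ofPred_eq, ← forall_and, abs_le]
  refine forall_congr' fun η ↦ forall_congr' fun _ ↦ ?_
  simp only [add_apply, sub_apply, smul_apply, NormedSpace.dual_def, smul_eq_mul]
  constructor <;> rintro ⟨h₁, h₂⟩ <;> constructor <;> linarith

theorem isClosed_orderUnitBounds (e : X) (b : StrongDual ℝ (StrongDual ℝ X)) :
    IsClosed (orderUnitBounds e b) := by
  have : orderUnitBounds e b = ⋂ η ∈ {η | dualNonneg X η}, {c : ℝ | |b η| ≤ c * η e} := by
    ext c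
    simp only [mem_orderUnitBounds_iff, Set.mem_iInter, Set.mem_ofPred_eq]
  rw [this]
  exact isClosed_biInter fun η _ ↦
    isClosed_le continuous_const (continuous_id.mul continuous_const)

theorem isUpperSet_orderUnitBounds {e : X} (he : 0 ≤ e) (b : StrongDual ℝ (StrongDual ℝ X)) :
    IsUpperSet (orderUnitBounds e b) := by
  intro c c' hcc' hc
  rw [mem_orderUnitBounds_iff] at hc ⊢
  exact fun η hη ↦ (hc η hη).trans (mul_le_mul_of_nonneg_right hcc' (hη e he))

variable {e : X} (hbnorm : ∀ b : StrongDual ℝ (StrongDual ℝ X), ‖b‖ = sInf (orderUnitBounds e b))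
include hbnorm

theorem orderUnitBounds_nonempty (b : StrongDual ℝ (StrongDual ℝ X)) :
    (orderUnitBounds e b).Nonempty := by
  by_contra hempty
  have hb : b = 0 := by
    rw [← ContinuousLinearMap.opNorm_zero_iff, hbnorm, Set.not_nonempty_iff_eq_empty.mp hempty,
      Real.sInf_empty]
  refine hempty ⟨0, mem_orderUnitBounds_iff.mpr fun η _ ↦ ?_⟩
  simp [hb]

theorem norm_le_iff_mem_orderUnitBounds (he : 0 ≤ e) {b : StrongDual ℝ (StrongDual ℝ X)} {c : ℝ}
    (hc : 0 ≤ c) : ‖b‖ ≤ c ↔ c ∈ orderUnitBounds e b := by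
  rw [hbnorm]
  exact ⟨(isUpperSet_orderUnitBounds he b).mem_of_csInf_le (isClosed_orderUnitBounds e b)
    (orderUnitBounds_nonempty hbnorm b), fun h ↦ Real.sInf_le_of_mem_of_nonneg h hc⟩

end OrderUnit

theorem stmt6_general
    (X : Type*) [NormedAddCommGroup X] [Lattice X] [NormedSpace ℝ X]
    -- `e` is a positive order unit inducing the lattice norm of the AM-space `X`
    (e : X) (he : 0 ≤ e)
    (hbnorm : ∀ a : StrongDual ℝ (StrongDual ℝ X), ‖a‖ = sInf {c : ℝ |
      bidualNonneg X (a + c • inclusionInDoubleDual ℝ X e) ∧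
      bidualNonneg X (c • inclusionInDoubleDual ℝ X e - a)})
    -- standing assumption on `Q`
    (H : Submodule ℝ X)
    -- `𝔥_Q = (H_Q^⊥)^⊥`
    (hQd : Set (StrongDual ℝ (StrongDual ℝ X)))
    (hhQd : hQd = {a : StrongDual ℝ (StrongDual ℝ X) |
      ∀ η : StrongDual ℝ X, (∀ h ∈ H, η h = 0) → a η = 0})
    (a : StrongDual ℝ (StrongDual ℝ X)) :
    sSup {r : ℝ | ∃ η : StrongDual ℝ X, (∀ h ∈ H, η h = 0) ∧ ‖η‖ ≤ 1 ∧ r = a η} =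
      sInf {c : ℝ | 0 ≤ c ∧ ∃ h ∈ hQd,
        bidualNonneg X ((a - h) + c • inclusionInDoubleDual ℝ X e) ∧
        bidualNonneg X (c • inclusionInDoubleDual ℝ X e - (a - h))} := by
  set N := polarSubmodule ℝ H
  have hsup := ContinuousLinearMap.sSup_apply_closedBall_submodule_eq_norm_comp N a
  simp only [N, mem_polarSubmodule] at hsup
  have hQd_eq : hQd = polarSubmodule ℝ N := by
    ext h
    simp only [hhQd, N, SetLike.mem_coe, mem_polarSubmodule, Set.mem_ofPred_eq]
  have hinf : {c : ℝ | 0 ≤ c ∧ ∃ h ∈ hQd, c ∈ orderUnitBounds e (a - h)} =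
      {c : ℝ | 0 ≤ c ∧ ∃ h ∈ polarSubmodule ℝ N, ‖a - h‖ ≤ c} := by
    ext c
    refine and_congr_right fun hc ↦ ?_
    simp only [hQd_eq, SetLike.mem_coe, norm_le_iff_mem_orderUnitBounds hbnorm he hc]
  rw [hsup, ← (ContinuousLinearMap.isLeast_norm_sub_polarSubmodule N a).csInf_eq]
  exact congrArg sInf hinf.symm

theorem stmt6
    (X : Type*) [NormedAddCommGroup X] [Lattice X] [IsOrderedAddMonoid X] [HasSolidNorm X] [NormedSpace ℝ X] [CompleteSpace X]
    -- `e` is a positive order unit inducing the lattice norm of the AM-space `X`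
    (e : X) (he : 0 ≤ e)
    (hnorm : ∀ f : X, ‖f‖ = sInf {c : ℝ | -(c • e) ≤ f ∧ f ≤ c • e})
    (hbnorm : ∀ a : StrongDual ℝ (StrongDual ℝ X), ‖a‖ = sInf {c : ℝ |
      bidualNonneg X (a + c • inclusionInDoubleDual ℝ X e) ∧
      bidualNonneg X (c • inclusionInDoubleDual ℝ X e - a)})
    -- standing assumption on `Q`
    (H : Submodule ℝ X) (hH : IsClosed (H : Set X))
    (Q : Set (StrongDual ℝ X)) (hQne : Q.Nonempty) (hQcl : IsClosed Q) (hQconv : Convex ℝ Q)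
    (hQ : Q = {η : StrongDual ℝ X | ∀ h ∈ H, η h = 0} ∩
      {η : StrongDual ℝ X | dualNonneg X η ∧ η e = 1})
    -- `𝔥_Q = (H_Q^⊥)^⊥`
    (hQd : Set (StrongDual ℝ (StrongDual ℝ X)))
    (hhQd : hQd = {a : StrongDual ℝ (StrongDual ℝ X) |
      ∀ η : StrongDual ℝ X, (∀ h ∈ H, η h = 0) → a η = 0})
    (a : StrongDual ℝ (StrongDual ℝ X)) :
    sSup {r : ℝ | ∃ η : StrongDual ℝ X, (∀ h ∈ H, η h = 0) ∧ ‖η‖ ≤ 1 ∧ r = a η} =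
      sInf {c : ℝ | 0 ≤ c ∧ ∃ h ∈ hQd,
        bidualNonneg X ((a - h) + c • inclusionInDoubleDual ℝ X e) ∧
        bidualNonneg X (c • inclusionInDoubleDual ℝ X e - (a - h))} :=
  stmt6_general X e he hbnorm H hQd hhQd a
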